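/- There exists a deterministic 2-selection mechanism with predictions (the fixed bidirectional permutation mechanism) that is impartial, 1-consistent, and 1/2-robust. -/

import Mathlib

/-- `E` has no self-loops. -/
def NoLoops {n : ℕ} (E : Finset (Fin n × Fin n)) : Prop := ∀ i, (i, i) ∉ E

/-- The indegree of vertex `i` in the graph with edge set `E`. -/
def indeg {n : ℕ} (E : Finset (Fin n × Fin n)) (i : Fin n) : ℕ :=
  (E.filter (fun e => e.2 = i)).card

/-- The total indegree of a set `S` of vertices. -/
def indegS {n : ℕ} (E : Finset (Fin n × Fin n)) (S : Finset (Fin n)) : ℕ :=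
  ∑ i ∈ S, indeg E i

/-- `Δ_k(G)`: the maximum total indegree of a set of `k` vertices. -/
def maxDeg {n : ℕ} (k : ℕ) (E : Finset (Fin n × Fin n)) : ℕ :=
  (Finset.powersetCard k Finset.univ).sup (indegS E)

/-- A (randomized) selection mechanism with predictions: for each `n`,
given a predicted set and a graph, it assigns a selection probability to each vertex. -/
abbrev Mech : Type :=
  ∀ n : ℕ, Finset (Fin n) → Finset (Fin n × Fin n) → Fin n → ℝ

/-- The probabilities lie in `[0,1]` and sum to at most `k` on every valid input. -/
def ValidMech (k : ℕ) (f : Mech) : Prop :=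
  ∀ (n : ℕ) (Sh : Finset (Fin n)) (E : Finset (Fin n × Fin n)),
    Sh.card = k → NoLoops E →
      (∀ i, 0 ≤ f n Sh E i ∧ f n Sh E i ≤ 1) ∧ (∑ i, f n Sh E i) ≤ (k : ℝ)

/-- Impartiality: the probability of selecting `i` does not depend on `i`'s outgoing edges. -/
def Impartial (k : ℕ) (f : Mech) : Prop :=
  ∀ (n : ℕ) (Sh : Finset (Fin n)) (E E' : Finset (Fin n × Fin n)) (i : Fin n),
    Sh.card = k → NoLoops E → NoLoops E' →
    E.filter (fun e => e.1 ≠ i) = E'.filter (fun e => e.1 ≠ i) →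
    f n Sh E i = f n Sh E' i

/-- `α`-consistency: an `α`-approximation whenever the prediction is accurate. -/
def Consistent (k : ℕ) (α : ℝ) (f : Mech) : Prop :=
  ∀ (n : ℕ) (Sh : Finset (Fin n)) (E : Finset (Fin n × Fin n)),
    Sh.card = k → NoLoops E → indegS E Sh = maxDeg k E →
    α * (maxDeg k E : ℝ) ≤ ∑ i, f n Sh E i * (indeg E i : ℝ)

/-- `β`-robustness: a `β`-approximation regardless of the prediction. -/
def Robust (k : ℕ) (β : ℝ) (f : Mech) : Prop :=
  ∀ (n : ℕ) (Sh : Finset (Fin n)) (E : Finset (Fin n × Fin n)),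
    Sh.card = k → NoLoops E →
    β * (maxDeg k E : ℝ) ≤ ∑ i, f n Sh E i * (indeg E i : ℝ)


/-- A deterministic mechanism only assigns probabilities 0 and 1. -/
def Deterministic (k : ℕ) (f : Mech) : Prop :=
  ∀ (n : ℕ) (Sh : Finset (Fin n)) (E : Finset (Fin n × Fin n)),
    Sh.card = k → NoLoops E → ∀ i, f n Sh E i = 0 ∨ f n Sh E i = 1

namespace FBP

variable {n : ℕ}

/-- Number of edges of `E` into `x` whose source lies in `S`. -/
def dIn (E : Finset (Fin n × Fin n)) (x : Fin n) (S : Finset (Fin n)) : ℕ :=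
  (S.filter (fun u => (u, x) ∈ E)).card

lemma dIn_mono {E : Finset (Fin n × Fin n)} {x : Fin n} {S T : Finset (Fin n)}
    (h : S ⊆ T) : dIn E x S ≤ dIn E x T :=
  Finset.card_le_card (Finset.filter_subset_filter _ h)

@[simp] lemma dIn_empty (E : Finset (Fin n × Fin n)) (x : Fin n) : dIn E x ∅ = 0 := by
  simp [dIn]

lemma dIn_le_erase_add_one (E : Finset (Fin n × Fin n)) (x c : Fin n)
    (S : Finset (Fin n)) : dIn E x S ≤ dIn E x (S.erase c) + 1 := by
  have h1 : S ⊆ insert c (S.erase c) := by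
    intro u hu
    by_cases huc : u = c
    · simp [huc]
    · exact Finset.mem_insert_of_mem (Finset.mem_erase.mpr ⟨huc, hu⟩)
  refine le_trans (dIn_mono h1) ?_
  unfold dIn
  rw [Finset.filter_insert]
  split
  · exact Finset.card_insert_le _ _
  · exact Nat.le_succ _

lemma dIn_union {E : Finset (Fin n × Fin n)} {x : Fin n} {S T : Finset (Fin n)}
    (h : Disjoint S T) : dIn E x (S ∪ T) = dIn E x S + dIn E x T := by
  unfold dIn
  rw [Finset.filter_union,
    Finset.card_union_of_disjoint (Finset.disjoint_filter_filter h)]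

lemma dIn_congr {E E' : Finset (Fin n × Fin n)} {i : Fin n}
    (hfil : E.filter (fun e => e.1 ≠ i) = E'.filter (fun e => e.1 ≠ i))
    {x : Fin n} {S : Finset (Fin n)} (hiS : i ∉ S) :
    dIn E x S = dIn E' x S := by
  unfold dIn
  congr 1
  apply Finset.filter_congr
  intro u hu
  have hui : u ≠ i := by rintro rfl; exact hiS hu
  have h1 := Finset.ext_iff.mp hfil (u, x)
  simp only [Finset.mem_filter] at h1
  constructor
  · intro hm; exact (h1.mp ⟨hm, hui⟩).1
  · intro hm; exact (h1.mpr ⟨hm, hui⟩).1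

lemma indeg_eq_dIn {E : Finset (Fin n × Fin n)} (hE : NoLoops E) (x : Fin n) :
    indeg E x = dIn E x (Finset.univ.erase x) := by
  unfold indeg dIn
  symm
  apply Finset.card_bij (fun u _ => (u, x))
  · intro u hu
    simp only [Finset.mem_filter] at hu ⊢
    exact ⟨hu.2, by simp⟩
  · intro u₁ h₁ u₂ h₂ h
    exact congrArg Prod.fst h
  · intro e he
    simp only [Finset.mem_filter] at he
    have he2 : e.2 = x := he.2
    have he1 : e.1 ≠ x := by
      intro h1
      apply hE x
      have : e = (x, x) := by
        have := Prod.mk.eta (p := e)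
        rw [← this, h1, he2]
      rw [← this]; exact he.1
    refine ⟨e.1, ?_, ?_⟩
    · simp only [Finset.mem_filter, Finset.mem_erase]
      refine ⟨⟨he1, Finset.mem_univ _⟩, ?_⟩
      have : (e.1, x) = e := by
        have := Prod.mk.eta (p := e)
        rw [← this, he2]
      rw [this]; exact he.1
    · have : (e.1, x) = e := by
        have := Prod.mk.eta (p := e)
        rw [← this, he2]
      exact this

/-- State of a pass: current champion, its frozen score, processed set. -/
structure St (n : ℕ) where
  c : Fin n
  s : ℕ
  P : Finset (Fin n)

/-- One step of the pass: challenger `x` compares its indegree from the processed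
set (excluding the current champion) against the champion's frozen score. -/
def step (E : Finset (Fin n × Fin n)) (st : St n) (x : Fin n) : St n :=
  if st.s ≤ dIn E x (st.P.erase st.c) then ⟨x, dIn E x st.P, insert x st.P⟩
  else ⟨st.c, st.s, insert x st.P⟩

def runL (E : Finset (Fin n × Fin n)) (v : Fin n) (M : List (Fin n)) : St n :=
  M.foldl (step E) ⟨v, 0, {v}⟩

/-- The set of elements strictly before `x` in the list `L`. -/
def bef : List (Fin n) → Fin n → Finset (Fin n)
  | [], _ => ∅
  | y :: L, x => if y = x then ∅ else insert y (bef L x)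

@[simp] lemma bef_nil (x : Fin n) : bef [] x = ∅ := rfl

@[simp] lemma bef_cons_self (L : List (Fin n)) (x : Fin n) : bef (x :: L) x = ∅ := by
  simp [bef]

lemma bef_cons_ne {y x : Fin n} (h : y ≠ x) (L : List (Fin n)) :
    bef (y :: L) x = insert y (bef L x) := by
  simp [bef, h]

lemma bef_append_left {x : Fin n} {L₁ : List (Fin n)} (hx : x ∈ L₁) (L₂ : List (Fin n)) :
    bef (L₁ ++ L₂) x = bef L₁ x := by
  induction L₁ with
  | nil => simp at hx
  | cons y L ih =>
    by_cases hyx : y = x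
    · subst hyx; simp
    · have hxL : x ∈ L := by
        rcases List.mem_cons.mp hx with h | h
        · exact absurd h.symm hyx
        · exact h
      rw [List.cons_append, bef_cons_ne hyx, bef_cons_ne hyx, ih hxL]

lemma bef_append_not {x : Fin n} {L₁ : List (Fin n)} (hx : x ∉ L₁) (L₂ : List (Fin n)) :
    bef (L₁ ++ L₂) x = L₁.toFinset ∪ bef L₂ x := by
  induction L₁ with
  | nil => simp
  | cons y L ih =>
    have hyx : y ≠ x := by rintro rfl; exact hx List.mem_cons_self
    have hxL : x ∉ L := fun h => hx (List.mem_cons_of_mem _ h)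
    rw [List.cons_append, bef_cons_ne hyx, ih hxL, List.toFinset_cons,
      Finset.insert_union]

/-- Specification of a completed pass over `L = v :: M`. -/
structure RSpec (E : Finset (Fin n × Fin n)) (L : List (Fin n)) (st : St n) : Prop where
  hP : st.P = L.toFinset
  hc : st.c ∈ L
  hs : st.s = dIn E st.c (bef L st.c)
  hall : ∀ x ∈ L, dIn E x (bef L x) ≤ st.s

lemma nodup_snoc {L : List (Fin n)} {x : Fin n} (h : (L ++ [x]).Nodup) :
    L.Nodup ∧ x ∉ L := by
  rw [List.nodup_append] at h
  exact ⟨h.1, fun hx => h.2.2 x hx x (List.mem_singleton_self x) rfl⟩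

lemma run_spec (E : Finset (Fin n × Fin n)) (v : Fin n) (M : List (Fin n))
    (hnd : (v :: M).Nodup) : RSpec E (v :: M) (runL E v M) := by
  induction M using List.reverseRecOn with
  | nil =>
    refine ⟨?_, ?_, ?_, ?_⟩
    · simp [runL]
    · simp [runL]
    · simp [runL]
    · intro x hx
      simp only [List.mem_singleton] at hx
      subst hx
      simp [runL]
  | append_singleton M x ih =>
    have hnd2 : ((v :: M) ++ [x]).Nodup := hnd
    obtain ⟨hndvM, hxvM⟩ := nodup_snoc hnd2
    have spec := ih hndvM
    have hrun : runL E v (M ++ [x]) = step E (runL E v M) x := by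
      simp [runL, List.foldl_append]
    set st := runL E v M with hst
    set L : List (Fin n) := v :: M with hL
    have hL' : v :: (M ++ [x]) = L ++ [x] := by simp [hL]
    have hbefx : bef (L ++ [x]) x = L.toFinset := by
      rw [bef_append_not hxvM, bef_cons_self, Finset.union_empty]
    have hbefy : ∀ y ∈ L, bef (L ++ [x]) y = bef L y := fun y hy =>
      bef_append_left hy [x]
    have hPL : (L ++ [x]).toFinset = insert x L.toFinset := by
      ext y; simp only [List.mem_toFinset, List.mem_append, List.mem_singleton, Finset.mem_insert]; tauto
    rw [hL', hrun]
    unfold step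
    split
    case isTrue hcond =>
      refine ⟨?_, ?_, ?_, ?_⟩
      · simp only
        rw [spec.hP, hPL]
      · simp
      · simp only
        rw [hbefx, spec.hP]
      · intro y hy
        rcases List.mem_append.mp hy with hyL | hyx
        · rw [hbefy y hyL]
          refine le_trans (spec.hall y hyL) ?_
          refine le_trans hcond ?_
          exact dIn_mono (Finset.erase_subset _ _)
        · simp only [List.mem_singleton] at hyx
          subst hyx
          rw [hbefx, spec.hP]
    case isFalse hcond =>
      have hcond' : dIn E x (st.P.erase st.c) + 1 ≤ st.s := by omega
      refine ⟨?_, ?_, ?_, ?_⟩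
      · simp only
        rw [spec.hP, hPL]
      · exact List.mem_append_left _ spec.hc
      · simp only
        rw [hbefy st.c spec.hc]
        exact spec.hs
      · intro y hy
        rcases List.mem_append.mp hy with hyL | hyx
        · rw [hbefy y hyL]
          exact spec.hall y hyL
        · simp only [List.mem_singleton] at hyx
          subst hyx
          rw [hbefx, ← spec.hP]
          exact le_trans (dIn_le_erase_add_one E y st.c st.P) hcond'

/-- Impartiality invariant for two coupled runs. -/
def Inv2 (i : Fin n) (L : List (Fin n)) (st st' : St n) : Prop :=
  st.P = L.toFinset ∧ st'.P = L.toFinset ∧ st.c ∈ st.P ∧ st'.c ∈ st'.P ∧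
    (st = st' ∨ (i ∈ st.P ∧ st.c ≠ i ∧ st'.c ≠ i))

lemma run_imp_aux {E E' : Finset (Fin n × Fin n)} {i : Fin n}
    (hfil : E.filter (fun e => e.1 ≠ i) = E'.filter (fun e => e.1 ≠ i))
    (v : Fin n) (M : List (Fin n)) (hnd : (v :: M).Nodup) :
    Inv2 i (v :: M) (runL E v M) (runL E' v M) := by
  induction M using List.reverseRecOn with
  | nil =>
    refine ⟨by simp [runL], by simp [runL], by simp [runL], by simp [runL], Or.inl rfl⟩
  | append_singleton M x ih =>
    have hnd2 : ((v :: M) ++ [x]).Nodup := hnd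
    obtain ⟨hndvM, hxvM⟩ := nodup_snoc hnd2
    obtain ⟨hP, hP', hcm, hcm', hdisj⟩ := ih hndvM
    have hrun : runL E v (M ++ [x]) = step E (runL E v M) x := by
      simp [runL, List.foldl_append]
    have hrun' : runL E' v (M ++ [x]) = step E' (runL E' v M) x := by
      simp [runL, List.foldl_append]
    set st := runL E v M with hst
    set st' := runL E' v M with hst'
    set L : List (Fin n) := v :: M with hL
    have hL' : v :: (M ++ [x]) = L ++ [x] := by simp [hL]
    have hPL : (L ++ [x]).toFinset = insert x L.toFinset := by
      ext y; simp only [List.mem_toFinset, List.mem_append, List.mem_singleton, Finset.mem_insert]; tauto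
    have hxP : x ∉ st.P := by rw [hP]; simpa [hL] using hxvM
    have hxP' : x ∉ st'.P := by rw [hP']; simpa [hL] using hxvM
    rw [hL', hrun, hrun']
    -- helper facts about step results
    have stepP : ∀ (F : Finset (Fin n × Fin n)) (t : St n), (step F t x).P = insert x t.P := by
      intro F t; unfold step; split <;> rfl
    have stepc : ∀ (F : Finset (Fin n × Fin n)) (t : St n),
        (step F t x).c = x ∨ (step F t x).c = t.c := by
      intro F t; unfold step; split
      · exact Or.inl rfl
      · exact Or.inr rfl
    have stepcmem : ∀ (F : Finset (Fin n × Fin n)) (t : St n), t.c ∈ t.P →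
        (step F t x).c ∈ (step F t x).P := by
      intro F t ht
      rcases stepc F t with h | h <;> rw [h, stepP]
      · exact Finset.mem_insert_self _ _
      · exact Finset.mem_insert_of_mem ht
    refine ⟨by rw [stepP, hP, hPL], by rw [stepP, hP', hPL],
      stepcmem E st hcm, stepcmem E' st' hcm', ?_⟩
    rcases hdisj with heq | ⟨hiP, hci, hci'⟩
    · -- states currently equal
      have hPP' : st'.P = st.P := by rw [← heq]
      by_cases hc : st.c = i
      · -- champion is i : scores agree
        have hiP : i ∈ st.P := hc ▸ hcm
        have hsx : dIn E x (st.P.erase st.c) = dIn E' x (st.P.erase st.c) := by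
          apply dIn_congr hfil
          rw [hc]; exact Finset.notMem_erase _ _
        by_cases hwin : st.s ≤ dIn E x (st.P.erase st.c)
        · right
          have hwin' : st'.s ≤ dIn E' x (st'.P.erase st'.c) := by
            rw [← heq, ← hsx]; exact hwin
          have h1 : (step E st x).c = x := by unfold step; rw [if_pos hwin]
          have h2 : (step E' st' x).c = x := by unfold step; rw [if_pos hwin']
          have hxi : x ≠ i := by rintro rfl; exact hxP hiP
          refine ⟨?_, ?_, ?_⟩
          · rw [stepP]; exact Finset.mem_insert_of_mem hiP
          · rw [h1]; exact hxi
          · rw [h2]; exact hxi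
        · left
          have hwin' : ¬ st'.s ≤ dIn E' x (st'.P.erase st'.c) := by
            rw [← heq, ← hsx]; exact hwin
          unfold step
          rw [if_neg hwin, if_neg hwin', heq]
      · by_cases hiP : i ∈ st.P
        · -- diverge possible; champion stays ≠ i either way
          right
          have hxi : x ≠ i := by rintro rfl; exact hxP hiP
          have hci'' : st'.c ≠ i := by rw [← heq]; exact hc
          refine ⟨by rw [stepP]; exact Finset.mem_insert_of_mem hiP, ?_, ?_⟩
          · rcases stepc E st with h | h <;> rw [h]
            · exact hxi
            · exact hc
          · rcases stepc E' st' with h | h <;> rw [h]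
            · exact hxi
            · exact hci''
        · -- i unseen so far: scores agree, states stay equal
          left
          have hiPe : i ∉ st.P.erase st.c := fun h => hiP (Finset.mem_of_mem_erase h)
          have hsx : dIn E x (st.P.erase st.c) = dIn E' x (st.P.erase st.c) :=
            dIn_congr hfil hiPe
          have hsP : dIn E x st.P = dIn E' x st.P := dIn_congr hfil hiP
          unfold step
          rw [← heq, ← hsx, ← hsP]
    · -- already diverged : i processed, champions ≠ i
      right
      have hxi : x ≠ i := by rintro rfl; exact hxP hiP
      refine ⟨by rw [stepP]; exact Finset.mem_insert_of_mem hiP, ?_, ?_⟩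
      · rcases stepc E st with h | h <;> rw [h]
        · exact hxi
        · exact hci
      · rcases stepc E' st' with h | h <;> rw [h]
        · exact hxi
        · exact hci'

lemma run_imp {E E' : Finset (Fin n × Fin n)} {i : Fin n}
    (hfil : E.filter (fun e => e.1 ≠ i) = E'.filter (fun e => e.1 ≠ i))
    (v : Fin n) (M : List (Fin n)) (hnd : (v :: M).Nodup) :
    ((runL E v M).c = i) ↔ ((runL E' v M).c = i) := by
  obtain ⟨_, _, _, _, hdisj⟩ := run_imp_aux hfil v M hnd
  rcases hdisj with heq | ⟨_, hci, hci'⟩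
  · rw [heq]
  · constructor
    · intro h; exact absurd h hci
    · intro h; exact absurd h hci'

/-- The middle part of the fixed order: all vertices other than `a` and `b`. -/
def mid (n : ℕ) (a b : Fin n) : List (Fin n) :=
  (List.finRange n).filter (fun v => decide (v ≠ a) && decide (v ≠ b))

lemma mem_mid {a b v : Fin n} : v ∈ mid n a b ↔ (v ≠ a ∧ v ≠ b) := by
  simp [mid, List.mem_filter]

lemma nodup_mid (a b : Fin n) : (mid n a b).Nodup :=
  (List.nodup_finRange n).filter _

/-- The fixed order: `a` first, `b` last. -/
def OL (n : ℕ) (a b : Fin n) : List (Fin n) := a :: (mid n a b ++ [b])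

lemma nodup_OL {a b : Fin n} (hab : a ≠ b) : (OL n a b).Nodup := by
  unfold OL
  rw [List.nodup_cons]
  constructor
  · intro h
    rcases List.mem_append.mp h with h1 | h1
    · exact (mem_mid.mp h1).1 rfl
    · simp only [List.mem_singleton] at h1; exact hab h1
  · rw [List.nodup_append]
    refine ⟨nodup_mid a b, List.nodup_singleton b, ?_⟩
    intro y hy z hz hyz
    simp only [List.mem_singleton] at hz
    exact (mem_mid.mp hy).2 (hyz.trans hz)

lemma mem_OL (a b x : Fin n) : x ∈ OL n a b := by
  unfold OL
  by_cases hxa : x = a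
  · subst hxa; exact List.mem_cons_self
  · apply List.mem_cons_of_mem
    by_cases hxb : x = b
    · subst hxb; exact List.mem_append_right _ (List.mem_singleton_self _)
    · exact List.mem_append_left _ (mem_mid.mpr ⟨hxa, hxb⟩)

lemma toFinset_OL (a b : Fin n) : (OL n a b).toFinset = Finset.univ := by
  apply Finset.eq_univ_of_forall
  intro x
  rw [List.mem_toFinset]
  exact mem_OL a b x

lemma OL_reverse (a b : Fin n) :
    (OL n a b).reverse = b :: ((mid n a b).reverse ++ [a]) := by
  unfold OL
  simp

/-- Splitting a vertex's indegree into before/after parts along a spanning list. -/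
lemma indeg_split {E : Finset (Fin n × Fin n)} (hE : NoLoops E)
    {L : List (Fin n)} (hnd : L.Nodup) (huniv : L.toFinset = Finset.univ)
    (x : Fin n) (hx : x ∈ L) :
    indeg E x = dIn E x (bef L x) + dIn E x (bef L.reverse x) := by
  obtain ⟨L₁, L₂, rfl⟩ := List.append_of_mem hx
  have hnd1 := hnd
  rw [List.nodup_append] at hnd1
  obtain ⟨hndL₁, hndxL₂, hdisj⟩ := hnd1
  have hxL₂ : x ∉ L₂ := (List.nodup_cons.mp hndxL₂).1
  have hxL₁ : x ∉ L₁ := fun h => hdisj x h x List.mem_cons_self rfl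
  have hdisj12 : ∀ y ∈ L₁, y ∉ L₂ := fun y hy hy' =>
    hdisj y hy y (List.mem_cons_of_mem _ hy') rfl
  have hbef1 : bef (L₁ ++ x :: L₂) x = L₁.toFinset := by
    rw [bef_append_not hxL₁, bef_cons_self, Finset.union_empty]
  have hrev : (L₁ ++ x :: L₂).reverse = L₂.reverse ++ x :: L₁.reverse := by
    simp
  have hxL₂r : x ∉ L₂.reverse := by rwa [List.mem_reverse]
  have hbef2 : bef (L₁ ++ x :: L₂).reverse x = L₂.toFinset := by
    rw [hrev, bef_append_not hxL₂r, bef_cons_self, Finset.union_empty,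
      List.toFinset_reverse]
  rw [hbef1, hbef2]
  have hdisjF : Disjoint L₁.toFinset L₂.toFinset := by
    rw [Finset.disjoint_left]
    intro y hy hy'
    rw [List.mem_toFinset] at hy hy'
    exact hdisj12 y hy hy'
  rw [← dIn_union hdisjF, indeg_eq_dIn hE x]
  congr 1
  have huniv' : L₁.toFinset ∪ insert x L₂.toFinset = Finset.univ := by
    rw [← huniv]
    simp [List.toFinset_append]
  rw [← huniv', Finset.erase_union_distrib,
    Finset.erase_eq_of_notMem (by rwa [List.mem_toFinset]),
    Finset.erase_insert (by rwa [List.mem_toFinset])]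

/-- Forward champion. -/
def champF (E : Finset (Fin n × Fin n)) (a b : Fin n) : Fin n :=
  (runL E a (mid n a b ++ [b])).c

/-- Backward champion. -/
def champB (E : Finset (Fin n × Fin n)) (a b : Fin n) : Fin n :=
  (runL E b ((mid n a b).reverse ++ [a])).c

/-- The fixed bidirectional permutation mechanism. -/
def mechF : Mech := fun n Sh E i =>
  if h : Sh.card = 2 then
    have hne : Sh.Nonempty := Finset.card_pos.mp (by omega)
    if i = champF E (Sh.min' hne) (Sh.max' hne) ∨
       i = champB E (Sh.min' hne) (Sh.max' hne) then 1 else 0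
  else 0

lemma mechF_eq {n : ℕ} {Sh : Finset (Fin n)} (h : Sh.card = 2)
    (E : Finset (Fin n × Fin n)) (i : Fin n) :
    mechF n Sh E i =
      if i = champF E (Sh.min' (Finset.card_pos.mp (by omega)))
             (Sh.max' (Finset.card_pos.mp (by omega))) ∨
         i = champB E (Sh.min' (Finset.card_pos.mp (by omega)))
             (Sh.max' (Finset.card_pos.mp (by omega))) then 1 else 0 := by
  unfold mechF
  rw [dif_pos h]


/-- Total indegree of the selected set. -/
def TN (E : Finset (Fin n × Fin n)) (a b : Fin n) : ℕ :=
  if champF E a b = champB E a b then indeg E (champF E a b)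
  else indeg E (champF E a b) + indeg E (champB E a b)

lemma core (E : Finset (Fin n × Fin n)) (hE : NoLoops E) (a b : Fin n) (hab : a ≠ b) :
    (∀ x, indeg E x ≤ TN E a b) ∧ (indeg E a + indeg E b ≤ TN E a b) := by
  have hndL : (OL n a b).Nodup := nodup_OL hab
  have hndR : (b :: ((mid n a b).reverse ++ [a])).Nodup := by
    rw [← OL_reverse]
    exact List.nodup_reverse.mpr hndL
  have specF := run_spec E a (mid n a b ++ [b]) hndL
  have specB := run_spec E b ((mid n a b).reverse ++ [a]) hndR
  set sF := (runL E a (mid n a b ++ [b])).s with hsF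
  set sB := (runL E b ((mid n a b).reverse ++ [a])).s with hsB
  have cF : ∀ x, dIn E x (bef (OL n a b) x) ≤ sF := fun x =>
    specF.hall x (mem_OL a b x)
  have cB : ∀ x, dIn E x (bef (OL n a b).reverse x) ≤ sB := by
    intro x
    rw [OL_reverse]
    exact specB.hall x (by rw [← OL_reverse]; exact List.mem_reverse.mpr (mem_OL a b x))
  have hsplit : ∀ x, indeg E x =
      dIn E x (bef (OL n a b) x) + dIn E x (bef (OL n a b).reverse x) :=
    fun x => indeg_split hE hndL (toFinset_OL a b) x (mem_OL a b x)
  have hFs : sF = dIn E (champF E a b) (bef (OL n a b) (champF E a b)) := specF.hs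
  have hBs : sB = dIn E (champB E a b) (bef (OL n a b).reverse (champB E a b)) := by
    rw [OL_reverse]; exact specB.hs
  have hTN : sF + sB ≤ TN E a b := by
    unfold TN
    by_cases hFB : champF E a b = champB E a b
    · rw [if_pos hFB, hsplit (champF E a b), ← hFs, hFB, ← hBs]
    · rw [if_neg hFB]
      have h1 : sF ≤ indeg E (champF E a b) := by
        rw [hsplit (champF E a b), hFs]; omega
      have h2 : sB ≤ indeg E (champB E a b) := by
        rw [hsplit (champB E a b), hBs]; omega
      omega
  constructor
  · intro x
    have := hsplit x
    have h1 := cF x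
    have h2 := cB x
    omega
  · have ha : indeg E a ≤ sB := by
      have h0 : bef (OL n a b) a = ∅ := bef_cons_self _ _
      have := hsplit a
      rw [h0, dIn_empty] at this
      rw [this]
      simpa using cB a
    have hb : indeg E b ≤ sF := by
      have h0 : bef (OL n a b).reverse b = ∅ := by
        rw [OL_reverse]; exact bef_cons_self _ _
      have := hsplit b
      rw [h0, dIn_empty] at this
      rw [this]
      simpa using cF b
    omega

lemma sumEval (E : Finset (Fin n × Fin n)) (a b : Fin n) :
    ∑ i, (if i = champF E a b ∨ i = champB E a b then (1:ℝ) else 0) * (indeg E i : ℝ)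
      = (TN E a b : ℝ) := by
  set F := champF E a b with hF
  set B := champB E a b with hB
  have h1 : ∀ i : Fin n, (if i = F ∨ i = B then (1:ℝ) else 0) * (indeg E i : ℝ)
      = if i ∈ ({F, B} : Finset (Fin n)) then (indeg E i : ℝ) else 0 := by
    intro i
    by_cases h : i = F ∨ i = B
    · rw [if_pos h, if_pos (by simpa using h), one_mul]
    · rw [if_neg h, if_neg (by simpa using h), zero_mul]
  rw [Finset.sum_congr rfl fun i _ => h1 i, Finset.sum_ite_mem, Finset.univ_inter]
  unfold TN
  rw [← hF, ← hB]
  by_cases hFB : F = B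
  · rw [if_pos hFB, hFB]
    have hpair : ({B, B} : Finset (Fin n)) = {B} := by simp
    rw [hpair, Finset.sum_singleton]
  · rw [if_neg hFB, Finset.sum_pair hFB]
    push_cast
    ring

lemma sumOne (E : Finset (Fin n × Fin n)) (a b : Fin n) :
    ∑ i, (if i = champF E a b ∨ i = champB E a b then (1:ℝ) else 0) ≤ 2 := by
  set F := champF E a b
  set B := champB E a b
  have h1 : ∀ i : Fin n, (if i = F ∨ i = B then (1:ℝ) else 0)
      = if i ∈ ({F, B} : Finset (Fin n)) then (1:ℝ) else 0 := by
    intro i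
    by_cases h : i = F ∨ i = B
    · rw [if_pos h, if_pos (by simpa using h)]
    · rw [if_neg h, if_neg (by simpa using h)]
  rw [Finset.sum_congr rfl fun i _ => h1 i, Finset.sum_ite_mem, Finset.univ_inter,
    Finset.sum_const, nsmul_eq_mul, mul_one]
  have h2 : ({F, B} : Finset (Fin n)).card ≤ 2 := by
    refine le_trans (Finset.card_insert_le _ _) ?_
    simp
  exact_mod_cast h2

end FBP

/-- There exists a deterministic 2-selection mechanism with predictions (the fixed
bidirectional permutation mechanism) that is impartial, 1-consistent, and 1/2-robust. -/
theorem fixed_bidirectional_permutation :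
    ∃ f : Mech, ValidMech 2 f ∧ Deterministic 2 f ∧ Impartial 2 f ∧
      Consistent 2 1 f ∧ Robust 2 (1 / 2) f := by
  refine ⟨FBP.mechF, ?_, ?_, ?_, ?_, ?_⟩
  · -- ValidMech
    intro n Sh E h2 hE
    constructor
    · intro i
      rw [FBP.mechF_eq h2]
      split
      · norm_num
      · norm_num
    · have := FBP.sumOne E (Sh.min' (Finset.card_pos.mp (by omega)))
        (Sh.max' (Finset.card_pos.mp (by omega)))
      calc ∑ i, FBP.mechF n Sh E i
          = ∑ i, (if i = FBP.champF E (Sh.min' (Finset.card_pos.mp (by omega)))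
              (Sh.max' (Finset.card_pos.mp (by omega))) ∨
              i = FBP.champB E (Sh.min' (Finset.card_pos.mp (by omega)))
              (Sh.max' (Finset.card_pos.mp (by omega))) then (1:ℝ) else 0) :=
            Finset.sum_congr rfl fun i _ => FBP.mechF_eq h2 E i
        _ ≤ 2 := this
        _ ≤ (2:ℕ) := by norm_num
  · -- Deterministic
    intro n Sh E h2 hE i
    rw [FBP.mechF_eq h2]
    split
    · right; rfl
    · left; rfl
  · -- Impartial
    intro n Sh E E' i h2 hE hE' hfil
    rw [FBP.mechF_eq h2, FBP.mechF_eq h2]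
    have hne : Sh.Nonempty := Finset.card_pos.mp (by omega)
    set a := Sh.min' hne
    set b := Sh.max' hne
    have hab : a ≠ b := ne_of_lt (Finset.min'_lt_max'_of_card Sh (by omega))
    have hndL : (FBP.OL n a b).Nodup := FBP.nodup_OL hab
    have hndR : (b :: ((FBP.mid n a b).reverse ++ [a])).Nodup := by
      rw [← FBP.OL_reverse]
      exact List.nodup_reverse.mpr hndL
    have h1 := FBP.run_imp hfil a (FBP.mid n a b ++ [b]) hndL
    have h2' := FBP.run_imp hfil b ((FBP.mid n a b).reverse ++ [a]) hndR
    apply if_congr _ rfl rfl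
    constructor
    · rintro (h | h)
      · exact Or.inl ((h1.mp h.symm).symm)
      · exact Or.inr ((h2'.mp h.symm).symm)
    · rintro (h | h)
      · exact Or.inl ((h1.mpr h.symm).symm)
      · exact Or.inr ((h2'.mpr h.symm).symm)
  · -- Consistent
    intro n Sh E h2 hE hpred
    have hne : Sh.Nonempty := Finset.card_pos.mp (by omega)
    set a := Sh.min' hne with ha
    set b := Sh.max' hne with hb
    have hab : a ≠ b := ne_of_lt (Finset.min'_lt_max'_of_card Sh (by omega))
    have hsum : ∑ i, FBP.mechF n Sh E i * (indeg E i : ℝ) = (FBP.TN E a b : ℝ) := by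
      rw [← FBP.sumEval E a b]
      exact Finset.sum_congr rfl fun i _ => by rw [FBP.mechF_eq h2]
    have hShEq : Sh = {a, b} := by
      symm
      apply Finset.eq_of_subset_of_card_le
      · intro x hx
        rcases Finset.mem_insert.mp hx with h | h
        · subst h; exact Sh.min'_mem hne
        · rw [Finset.mem_singleton] at h; subst h; exact Sh.max'_mem hne
      · rw [h2, Finset.card_pair hab]
    have hab' : indegS E Sh = indeg E a + indeg E b := by
      rw [hShEq]
      exact Finset.sum_pair hab
    have hcore := (FBP.core E hE a b hab).2
    rw [hsum, one_mul, ← hpred, hab']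
    exact_mod_cast hcore
  · -- Robust
    intro n Sh E h2 hE
    have hne : Sh.Nonempty := Finset.card_pos.mp (by omega)
    set a := Sh.min' hne
    set b := Sh.max' hne
    have hab : a ≠ b := ne_of_lt (Finset.min'_lt_max'_of_card Sh (by omega))
    have hsum : ∑ i, FBP.mechF n Sh E i * (indeg E i : ℝ) = (FBP.TN E a b : ℝ) := by
      rw [← FBP.sumEval E a b]
      exact Finset.sum_congr rfl fun i _ => by rw [FBP.mechF_eq h2]
    have hcore := (FBP.core E hE a b hab).1
    have hmax : maxDeg 2 E ≤ 2 * FBP.TN E a b := by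
      apply Finset.sup_le
      intro S hS
      rw [Finset.mem_powersetCard] at hS
      calc indegS E S ≤ ∑ _i ∈ S, FBP.TN E a b :=
            Finset.sum_le_sum fun i _ => hcore i
        _ = S.card * FBP.TN E a b := by rw [Finset.sum_const, smul_eq_mul]
        _ = 2 * FBP.TN E a b := by rw [hS.2]
    rw [hsum]
    have : (maxDeg 2 E : ℝ) ≤ 2 * (FBP.TN E a b : ℝ) := by exact_mod_cast hmax
    linarith
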